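/- Doubling-of-variables lemma, asymptotics of the maximizer: under the same hypotheses (T, η, β, S > 0; u, u' continuous on ℝ²×[0,T] with u(·,0) = u'(·,0) = f, u 1-Lipschitz in the space variable, u(x,t) ≤ f(x), 0 ≤ f(y) − u'(y,s) ≤ S·s, and M := sup (u − u' − η·t − 2β‖x‖²) > 0), letting M̄(ε,α) denote the supremum over (ℝ²×[0,T])² of ψ(x,t,y,s) := u(x,t) − u'(y,s) − ‖x−y‖²/ε² − (t−s)²/α² − η·t − β(‖x‖² + ‖y‖²), one has: (3) M̄(ε,α) → M as (ε,α) → (0,0) with ε, α ∈ (0,1]; and (4) there exists ε₀ > 0 such that for all ε, α ∈ (0,ε₀], every maximizer (x̄,t̄,ȳ,s̄) of ψ satisfies t̄ > 0 and s̄ > 0. -/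
import Mathlib

open Real Filter

/-- The Euclidean norm on `ℝ²`. -/
noncomputable def enorm2 (x : ℝ × ℝ) : ℝ := Real.sqrt (x.1 ^ 2 + x.2 ^ 2)

lemma enorm2_nonneg (x : ℝ × ℝ) : 0 ≤ enorm2 x := Real.sqrt_nonneg _

lemma sq_enorm2 (x : ℝ × ℝ) : enorm2 x ^ 2 = x.1 ^ 2 + x.2 ^ 2 :=
  Real.sq_sqrt (by positivity)

lemma enorm2_add_le (a b : ℝ × ℝ) : enorm2 (a + b) ≤ enorm2 a + enorm2 b := by
  have hA := sq_enorm2 a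
  have hB := sq_enorm2 b
  have hA0 := enorm2_nonneg a
  have hB0 := enorm2_nonneg b
  have hcs : a.1 * b.1 + a.2 * b.2 ≤ enorm2 a * enorm2 b := by
    have h1 : a.1 * b.1 + a.2 * b.2 ≤ |a.1 * b.1 + a.2 * b.2| := le_abs_self _
    have h2 : |a.1 * b.1 + a.2 * b.2| = Real.sqrt ((a.1 * b.1 + a.2 * b.2) ^ 2) :=
      (Real.sqrt_sq_eq_abs _).symm
    have h3 : (a.1 * b.1 + a.2 * b.2) ^ 2 ≤ (enorm2 a * enorm2 b) ^ 2 := by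
      rw [mul_pow, hA, hB]; nlinarith [sq_nonneg (a.1 * b.2 - a.2 * b.1)]
    calc a.1 * b.1 + a.2 * b.2 ≤ Real.sqrt ((a.1 * b.1 + a.2 * b.2) ^ 2) := by rw [← h2]; exact h1
      _ ≤ Real.sqrt ((enorm2 a * enorm2 b) ^ 2) := Real.sqrt_le_sqrt h3
      _ = enorm2 a * enorm2 b := Real.sqrt_sq (by positivity)
  have heq : enorm2 (a + b) = Real.sqrt ((a.1 + b.1) ^ 2 + (a.2 + b.2) ^ 2) := rfl
  rw [heq]
  calc Real.sqrt ((a.1 + b.1) ^ 2 + (a.2 + b.2) ^ 2)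
      ≤ Real.sqrt ((enorm2 a + enorm2 b) ^ 2) := by
        apply Real.sqrt_le_sqrt; nlinarith
    _ = enorm2 a + enorm2 b := Real.sqrt_sq (by positivity)

lemma enorm2_neg (x : ℝ × ℝ) : enorm2 (-x) = enorm2 x := by simp [enorm2]

lemma enorm2_sub_le (a b : ℝ × ℝ) : enorm2 (a - b) ≤ enorm2 a + enorm2 b := by
  have h := enorm2_add_le a (-b); rw [enorm2_neg] at h; simpa [sub_eq_add_neg] using h

lemma enorm2_le_add (a b : ℝ × ℝ) : enorm2 a ≤ enorm2 b + enorm2 (a - b) := by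
  have h := enorm2_add_le b (a - b); simpa using h

lemma abs_fst_le (x : ℝ × ℝ) : |x.1| ≤ enorm2 x := by
  rw [← Real.sqrt_sq_eq_abs]
  exact Real.sqrt_le_sqrt (by nlinarith [sq_nonneg x.2])

lemma abs_snd_le (x : ℝ × ℝ) : |x.2| ≤ enorm2 x := by
  rw [← Real.sqrt_sq_eq_abs]
  exact Real.sqrt_le_sqrt (by nlinarith [sq_nonneg x.1])

lemma dist_le_enorm2 (x y : ℝ × ℝ) : dist x y ≤ enorm2 (x - y) := by
  rw [Prod.dist_eq]
  apply max_le
  · rw [Real.dist_eq]; exact abs_fst_le (x - y)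
  · rw [Real.dist_eq]; exact abs_snd_le (x - y)

lemma enorm2_zero : enorm2 0 = 0 := by simp [enorm2]

lemma hquad (c r e : ℝ) (he : 0 < e) : c * r - r ^ 2 / e ^ 2 ≤ c ^ 2 * e ^ 2 / 4 := by
  have he2 : (0:ℝ) < e ^ 2 := by positivity
  have hre : r ^ 2 / e ^ 2 * e ^ 2 = r ^ 2 := div_mul_cancel₀ _ (ne_of_gt he2)
  nlinarith [sq_nonneg (2 * r - c * e ^ 2), he2, hre]

lemma sqdiff (a b d r c : ℝ) (ha : 0 ≤ a) (hb : 0 ≤ b) (haR : a ≤ r) (hbR : b ≤ r)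
    (hab : a ≤ b + d) (hd : 0 ≤ d) (hdc : d ≤ c) : a ^ 2 - b ^ 2 ≤ 2 * r * c := by
  have hr : 0 ≤ r := ha.trans haR
  nlinarith [mul_nonneg hd (add_nonneg ha hb), mul_nonneg hr hd, mul_nonneg hr (sub_nonneg.mpr hdc)]

/-- The penalized "doubled variables" functional
`ψ(x,t,y,s) = u(x,t) - u'(y,s) - ‖x-y‖²/ε² - (t-s)²/α² - η t - β(‖x‖² + ‖y‖²)`. -/
noncomputable def psi (u u' : ℝ × ℝ → ℝ → ℝ) (η β ε α : ℝ)
    (x : ℝ × ℝ) (t : ℝ) (y : ℝ × ℝ) (s : ℝ) : ℝ :=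
  u x t - u' y s - enorm2 (x - y) ^ 2 / ε ^ 2 - (t - s) ^ 2 / α ^ 2
    - η * t - β * (enorm2 x ^ 2 + enorm2 y ^ 2)

/-- `M = sup_{x, t ∈ [0,T]} ( u(x,t) - u'(x,t) - η t - 2β‖x‖² )`. -/
noncomputable def Msup (u u' : ℝ × ℝ → ℝ → ℝ) (η β T : ℝ) : ℝ :=
  sSup {m : ℝ | ∃ (x : ℝ × ℝ) (t : ℝ), t ∈ Set.Icc 0 T ∧
    m = u x t - u' x t - η * t - 2 * β * enorm2 x ^ 2}

/-- `M̄(ε,α) = sup ψ` over `(ℝ² × [0,T])²`. -/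
noncomputable def Mbar (u u' : ℝ × ℝ → ℝ → ℝ) (η β T ε α : ℝ) : ℝ :=
  sSup {m : ℝ | ∃ (x : ℝ × ℝ) (t : ℝ) (y : ℝ × ℝ) (s : ℝ),
    t ∈ Set.Icc 0 T ∧ s ∈ Set.Icc 0 T ∧ m = psi u u' η β ε α x t y s}

lemma psi_diag (u u' : ℝ × ℝ → ℝ → ℝ) (η β ε α : ℝ) (x : ℝ × ℝ) (t : ℝ) :
    psi u u' η β ε α x t x t = u x t - u' x t - η * t - 2 * β * enorm2 x ^ 2 := by
  unfold psi
  rw [sub_self, sub_self, enorm2_zero]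
  ring

set_option maxHeartbeats 1000000 in
/-- Doubling-of-variables lemma: asymptotics of the maximum and positivity of the
times of any maximizer, for small penalization parameters. -/
theorem stmt15 (T η β S : ℝ) (hT : 0 < T) (hη : 0 < η) (hβ : 0 < β) (hS : 0 < S)
    (f : ℝ × ℝ → ℝ) (u u' : ℝ × ℝ → ℝ → ℝ)
    (hu_cont : ContinuousOn (fun p : (ℝ × ℝ) × ℝ => u p.1 p.2) (Set.univ ×ˢ Set.Icc 0 T))
    (hu'_cont : ContinuousOn (fun p : (ℝ × ℝ) × ℝ => u' p.1 p.2) (Set.univ ×ˢ Set.Icc 0 T))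
    (hu0 : ∀ x : ℝ × ℝ, u x 0 = f x)
    (hu'0 : ∀ x : ℝ × ℝ, u' x 0 = f x)
    (hulip : ∀ (x y : ℝ × ℝ) (t : ℝ), t ∈ Set.Icc 0 T → |u x t - u y t| ≤ enorm2 (x - y))
    (hule : ∀ (x : ℝ × ℝ) (t : ℝ), t ∈ Set.Icc 0 T → u x t ≤ f x)
    (hu'grow : ∀ (y : ℝ × ℝ) (s : ℝ), s ∈ Set.Icc 0 T →
      0 ≤ f y - u' y s ∧ f y - u' y s ≤ S * s)
    (hMpos : 0 < Msup u u' η β T) :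
    Tendsto (fun p : ℝ × ℝ => Mbar u u' η β T p.1 p.2)
      (nhdsWithin ((0, 0) : ℝ × ℝ) (Set.Ioc (0 : ℝ) 1 ×ˢ Set.Ioc (0 : ℝ) 1))
      (nhds (Msup u u' η β T)) ∧
    ∃ ε₀ : ℝ, 0 < ε₀ ∧ ∀ ε ∈ Set.Ioc (0 : ℝ) ε₀, ∀ α ∈ Set.Ioc (0 : ℝ) ε₀,
      ∀ (xb yb : ℝ × ℝ) (tb sb : ℝ), tb ∈ Set.Icc 0 T → sb ∈ Set.Icc 0 T →
        (∀ (x y : ℝ × ℝ) (t s : ℝ), t ∈ Set.Icc 0 T → s ∈ Set.Icc 0 T →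
          psi u u' η β ε α x t y s ≤ psi u u' η β ε α xb tb yb sb) →
        0 < tb ∧ 0 < sb := by
  set M := Msup u u' η β T with hMdef
  set AA : Set ℝ := {m : ℝ | ∃ (x : ℝ × ℝ) (t : ℝ), t ∈ Set.Icc 0 T ∧
    m = u x t - u' x t - η * t - 2 * β * enorm2 x ^ 2} with hAAdef
  set BB : ℝ → ℝ → Set ℝ := fun ε α => {m : ℝ | ∃ (x : ℝ × ℝ) (t : ℝ) (y : ℝ × ℝ) (s : ℝ),
    t ∈ Set.Icc 0 T ∧ s ∈ Set.Icc 0 T ∧ m = psi u u' η β ε α x t y s} with hBBdef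
  have hMA : M = sSup AA := rfl
  have hMbarB : ∀ ε α : ℝ, Mbar u u' η β T ε α = sSup (BB ε α) := fun _ _ => rfl
  have hT0 : (0:ℝ) ∈ Set.Icc (0:ℝ) T := ⟨le_refl 0, hT.le⟩
  have hf_lip : ∀ x y : ℝ × ℝ, f x - f y ≤ enorm2 (x - y) := by
    intro x y
    have h := hulip x y 0 hT0
    rw [hu0, hu0] at h
    exact (le_abs_self _).trans h
  have hkey : ∀ (x : ℝ × ℝ) (t : ℝ) (y : ℝ × ℝ) (s : ℝ), t ∈ Set.Icc 0 T → s ∈ Set.Icc 0 T →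
      u x t - u' y s ≤ enorm2 (x - y) + S * s := by
    intro x t y s ht hs
    have h1 := hule x t ht
    have h2 := (hu'grow y s hs).2
    have h3 := hf_lip x y
    linarith
  have hpsi_le : ∀ (ε α : ℝ) (x : ℝ × ℝ) (t : ℝ) (y : ℝ × ℝ) (s : ℝ),
      t ∈ Set.Icc 0 T → s ∈ Set.Icc 0 T →
      psi u u' η β ε α x t y s ≤ enorm2 (x - y) + S * s - enorm2 (x - y) ^ 2 / ε ^ 2
        - (t - s) ^ 2 / α ^ 2 - η * t - β * enorm2 x ^ 2 - β * enorm2 y ^ 2 := by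
    intro ε α x t y s ht hs
    have h := hkey x t y s ht hs
    unfold psi
    linarith [h]
  have hA_ne : AA.Nonempty := ⟨_, 0, 0, hT0, rfl⟩
  have hAB : ∀ ε α : ℝ, AA ⊆ BB ε α := by
    intro ε α m hm
    obtain ⟨x, t, ht, rfl⟩ := hm
    exact ⟨x, t, x, t, ht, ht, (psi_diag u u' η β ε α x t).symm⟩
  have hB_bdd : ∀ ε α : ℝ, 0 < ε → BddAbove (BB ε α) := by
    intro ε α hε
    refine ⟨ε ^ 2 / 4 + S * T, ?_⟩
    rintro m ⟨x, t, y, s, ht, hs, rfl⟩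
    have h := hpsi_le ε α x t y s ht hs
    have hq := hquad 1 (enorm2 (x - y)) ε hε
    have hSs : S * s ≤ S * T := mul_le_mul_of_nonneg_left hs.2 hS.le
    have h1 : 0 ≤ (t - s) ^ 2 / α ^ 2 := by positivity
    have h2 : 0 ≤ η * t := mul_nonneg hη.le ht.1
    have h3 : 0 ≤ β * enorm2 x ^ 2 := by positivity
    have h4 : 0 ≤ β * enorm2 y ^ 2 := by positivity
    simp only [one_mul, one_pow] at hq
    linarith [hq]
  have hMbar_ge : ∀ ε α : ℝ, 0 < ε → M ≤ Mbar u u' η β T ε α := by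
    intro ε α hε
    rw [hMbarB, hMA]
    exact csSup_le_csSup (hB_bdd ε α hε) hA_ne (hAB ε α)
  have hA_bdd : BddAbove AA := (hB_bdd 1 1 one_pos).mono (hAB 1 1)
  have hMle : ∀ (x : ℝ × ℝ) (t : ℝ), t ∈ Set.Icc 0 T →
      u x t - u' x t - η * t - 2 * β * enorm2 x ^ 2 ≤ M := by
    intro x t ht
    rw [hMA]
    exact le_csSup hA_bdd ⟨x, t, ht, rfl⟩
  constructor
  · -- the tendsto part
    set C₁ : ℝ := 1 / 4 + S * T with hC₁def
    have hC₁ : 0 < C₁ := by positivity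
    set R : ℝ := Real.sqrt (C₁ / β) with hRdef
    have hR0 : 0 ≤ R := Real.sqrt_nonneg _
    set C₂ : ℝ := Real.sqrt (2 * R + S * T) with hC₂def
    have hC₂0 : 0 ≤ C₂ := Real.sqrt_nonneg _
    set K : Set ((ℝ × ℝ) × ℝ) := Metric.closedBall (0 : ℝ × ℝ) (R + 1) ×ˢ Set.Icc (0:ℝ) T
      with hKdef
    have hKc : IsCompact K := (isCompact_closedBall _ _).prod isCompact_Icc
    have hu'K : ContinuousOn (fun p : (ℝ × ℝ) × ℝ => u' p.1 p.2) K :=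
      hu'_cont.mono (Set.prod_mono (Set.subset_univ _) subset_rfl)
    have hUC := Metric.uniformContinuousOn_iff.mp
      (hKc.uniformContinuousOn_of_continuous hu'K)
    rw [Metric.tendsto_nhds]
    intro δ hδ
    obtain ⟨ρ, hρ, hρuc⟩ := hUC (δ / 3) (by positivity)
    set D : ℝ := C₂ + Real.sqrt C₁ + 1 with hDdef
    have hD : 0 < D := by positivity
    set ρ' : ℝ := min (ρ / D) (δ / (3 * (2 * β * R * C₂ + 1))) with hρ'def
    have hρ'pos : 0 < ρ' := lt_min (by positivity) (by positivity)
    have hρ'1 : ρ' * D ≤ ρ := by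
      have := min_le_left (ρ / D) (δ / (3 * (2 * β * R * C₂ + 1)))
      calc ρ' * D ≤ (ρ / D) * D := mul_le_mul_of_nonneg_right this hD.le
        _ = ρ := div_mul_cancel₀ _ (ne_of_gt hD)
    have hρ'2 : ρ' * (3 * (2 * β * R * C₂ + 1)) ≤ δ := by
      have h := min_le_right (ρ / D) (δ / (3 * (2 * β * R * C₂ + 1)))
      have hpos : (0:ℝ) < 3 * (2 * β * R * C₂ + 1) := by positivity
      calc ρ' * (3 * (2 * β * R * C₂ + 1))
          ≤ (δ / (3 * (2 * β * R * C₂ + 1))) * (3 * (2 * β * R * C₂ + 1)) :=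
            mul_le_mul_of_nonneg_right h hpos.le
        _ = δ := div_mul_cancel₀ _ (ne_of_gt hpos)
    have hev : ∀ᶠ p : ℝ × ℝ in nhds ((0, 0) : ℝ × ℝ), |p.1| < ρ' ∧ |p.2| < ρ' := by
      rw [Metric.eventually_nhds_iff]
      refine ⟨ρ', hρ'pos, fun q hq => ?_⟩
      rw [Prod.dist_eq] at hq
      have h := max_lt_iff.mp hq
      constructor
      · simpa [Real.dist_eq] using h.1
      · simpa [Real.dist_eq] using h.2
    filter_upwards [self_mem_nhdsWithin, eventually_nhdsWithin_of_eventually_nhds hev]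
      with p hpmem hpsm
    obtain ⟨hp1, hp2⟩ := Set.mem_prod.mp hpmem
    obtain ⟨hε0, hε1⟩ := hp1
    obtain ⟨hα0, hα1⟩ := hp2
    set ε : ℝ := p.1
    set α : ℝ := p.2
    have hερ : ε < ρ' := by rw [abs_of_pos hε0] at hpsm; exact hpsm.1
    have hαρ : α < ρ' := by rw [abs_of_pos hα0] at hpsm; exact hpsm.2
    -- core bound : every element of BB ε α is ≤ M + 2δ/3
    have hub : ∀ m ∈ BB ε α, m ≤ M + 2 * δ / 3 := by
      rintro m ⟨x, t, y, s, ht, hs, rfl⟩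
      rcases le_or_gt (psi u u' η β ε α x t y s) M with hle | hgt
      · linarith
      have hψpos : 0 < psi u u' η β ε α x t y s := lt_trans hMpos hgt
      have hb := hpsi_le ε α x t y s ht hs
      have hq1 : enorm2 (x - y) - enorm2 (x - y) ^ 2 / ε ^ 2 ≤ ε ^ 2 / 4 := by
        have h := hquad 1 (enorm2 (x - y)) ε hε0
        simp only [one_mul, one_pow] at h; linarith [h]
      have hε2 : ε ^ 2 ≤ 1 := by rw [pow_two]; exact mul_le_one₀ hε1 hε0.le hε1
      have hSs : S * s ≤ S * T := mul_le_mul_of_nonneg_left hs.2 hS.le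
      have hηt : 0 ≤ η * t := mul_nonneg hη.le ht.1
      have hts_nn : 0 ≤ (t - s) ^ 2 / α ^ 2 := by positivity
      have hxnn := enorm2_nonneg x
      have hynn := enorm2_nonneg y
      have hx2nn : 0 ≤ β * enorm2 x ^ 2 := by positivity
      have hy2nn : 0 ≤ β * enorm2 y ^ 2 := by positivity
      have hxsq : β * enorm2 x ^ 2 ≤ C₁ := by rw [hC₁def]; linarith
      have hysq : β * enorm2 y ^ 2 ≤ C₁ := by rw [hC₁def]; linarith
      have hxR : enorm2 x ≤ R := by
        rw [hRdef]
        refine (Real.le_sqrt (enorm2_nonneg x) (by positivity)).mpr ?_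
        rw [le_div_iff₀ hβ]
        linarith [hxsq]
      have hyR : enorm2 y ≤ R := by
        rw [hRdef]
        refine (Real.le_sqrt (enorm2_nonneg y) (by positivity)).mpr ?_
        rw [le_div_iff₀ hβ]
        linarith [hysq]
      have hxyle : enorm2 (x - y) ≤ 2 * R := (enorm2_sub_le x y).trans (by linarith)
      have hxy2 : enorm2 (x - y) ^ 2 / ε ^ 2 ≤ 2 * R + S * T := by linarith
      have hε2pos : (0:ℝ) < ε ^ 2 := by positivity
      have hxyC : enorm2 (x - y) ≤ C₂ * ε := by
        have h1 : enorm2 (x - y) ^ 2 ≤ (C₂ * ε) ^ 2 := by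
          have h2 : enorm2 (x - y) ^ 2 ≤ (2 * R + S * T) * ε ^ 2 := by
            have := (div_le_iff₀ hε2pos).mp hxy2; linarith
          have h3 : (C₂ * ε) ^ 2 = (2 * R + S * T) * ε ^ 2 := by
            rw [mul_pow, hC₂def, Real.sq_sqrt (by positivity)]
          linarith
        calc enorm2 (x - y) = Real.sqrt (enorm2 (x - y) ^ 2) :=
              (Real.sqrt_sq (enorm2_nonneg _)).symm
          _ ≤ Real.sqrt ((C₂ * ε) ^ 2) := Real.sqrt_le_sqrt h1
          _ = C₂ * ε := Real.sqrt_sq (by positivity)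
      have htsC : |t - s| ≤ Real.sqrt C₁ * α := by
        have hα2pos : (0:ℝ) < α ^ 2 := by positivity
        have h1 : (t - s) ^ 2 / α ^ 2 ≤ C₁ := by rw [hC₁def]; linarith
        have h2 : (t - s) ^ 2 ≤ C₁ * α ^ 2 := by
          have := (div_le_iff₀ hα2pos).mp h1; linarith
        calc |t - s| = Real.sqrt ((t - s) ^ 2) := (Real.sqrt_sq_eq_abs _).symm
          _ ≤ Real.sqrt (C₁ * α ^ 2) := Real.sqrt_le_sqrt h2
          _ = Real.sqrt C₁ * α := by
              rw [Real.sqrt_mul hC₁.le, Real.sqrt_sq hα0.le]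
      have hxK : (x, t) ∈ K := by
        refine ⟨Metric.mem_closedBall.mpr ?_, ht⟩
        calc dist x 0 ≤ enorm2 (x - 0) := dist_le_enorm2 x 0
          _ = enorm2 x := by rw [sub_zero]
          _ ≤ R + 1 := by linarith
      have hyK : (y, s) ∈ K := by
        refine ⟨Metric.mem_closedBall.mpr ?_, hs⟩
        calc dist y 0 ≤ enorm2 (y - 0) := dist_le_enorm2 y 0
          _ = enorm2 y := by rw [sub_zero]
          _ ≤ R + 1 := by linarith
      have hd : dist ((x, t) : (ℝ × ℝ) × ℝ) ((y, s) : (ℝ × ℝ) × ℝ) < ρ := by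
        rw [Prod.dist_eq]
        have hsq1 : 0 ≤ Real.sqrt C₁ := Real.sqrt_nonneg _
        apply max_lt
        · calc dist x y ≤ enorm2 (x - y) := dist_le_enorm2 x y
            _ ≤ C₂ * ε := hxyC
            _ ≤ C₂ * ρ' := mul_le_mul_of_nonneg_left hερ.le hC₂0
            _ < D * ρ' := by
                rw [hDdef]; linarith [mul_nonneg hsq1 hρ'pos.le, hρ'pos]
            _ ≤ ρ := by rw [mul_comm]; exact hρ'1
        · calc dist t s = |t - s| := Real.dist_eq t s
            _ ≤ Real.sqrt C₁ * α := htsC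
            _ ≤ Real.sqrt C₁ * ρ' := mul_le_mul_of_nonneg_left hαρ.le hsq1
            _ < D * ρ' := by
                rw [hDdef]; linarith [mul_nonneg hC₂0 hρ'pos.le, hρ'pos]
            _ ≤ ρ := by rw [mul_comm]; exact hρ'1
      have hu'close : |u' x t - u' y s| < δ / 3 := by
        have h := hρuc (x, t) hxK (y, s) hyK hd
        rwa [Real.dist_eq] at h
      have hβterm : β * (enorm2 x ^ 2 - enorm2 y ^ 2) ≤ δ / 3 := by
        have h1 := enorm2_le_add x y
        have hCε : 0 ≤ C₂ * ε := by positivity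
        have h2 : enorm2 x ^ 2 - enorm2 y ^ 2 ≤ 2 * R * (C₂ * ε) :=
          sqdiff _ _ _ _ _ (enorm2_nonneg x) (enorm2_nonneg y) hxR hyR h1
            (enorm2_nonneg (x - y)) hxyC
        have e1 : β * (enorm2 x ^ 2 - enorm2 y ^ 2) ≤ β * (2 * R * (C₂ * ε)) :=
          mul_le_mul_of_nonneg_left h2 hβ.le
        have e2 : β * (2 * R * (C₂ * ε)) ≤ 2 * β * R * C₂ * ρ' := by
          linarith [mul_le_mul_of_nonneg_left hερ.le
            (show (0:ℝ) ≤ 2 * β * R * C₂ by positivity)]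
        have e3 : 2 * β * R * C₂ * ρ' ≤ δ / 3 := by linarith [hρ'2, hρ'pos]
        linarith
      have hexp : psi u u' η β ε α x t y s ≤
          (u x t - u' x t - η * t - 2 * β * enorm2 x ^ 2) + (u' x t - u' y s)
            + β * (enorm2 x ^ 2 - enorm2 y ^ 2) := by
        unfold psi
        have hP1 : 0 ≤ enorm2 (x - y) ^ 2 / ε ^ 2 := by positivity
        linarith [hP1, hts_nn]
      have hM1 := hMle x t ht
      have habs := (abs_lt.mp hu'close).2
      linarith
    have hBne : (BB ε α).Nonempty := ⟨_, hAB ε α hA_ne.some_mem⟩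
    have hub2 : Mbar u u' η β T ε α ≤ M + 2 * δ / 3 := by
      rw [hMbarB]; exact csSup_le hBne hub
    have hlb := hMbar_ge ε α hε0
    rw [Real.dist_eq, abs_lt]
    constructor <;> linarith
  · -- positivity of times of maximizers
    refine ⟨Real.sqrt (M / (1 + S ^ 2)), Real.sqrt_pos.mpr (by positivity), ?_⟩
    set ε₀ : ℝ := Real.sqrt (M / (1 + S ^ 2)) with hε₀def
    have hε₀sq : ε₀ ^ 2 = M / (1 + S ^ 2) := Real.sq_sqrt (by positivity)
    intro ε hε α hα xb yb tb sb htb hsb hmax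
    have hεsq : ε ^ 2 ≤ M / (1 + S ^ 2) := by
      rw [← hε₀sq]; nlinarith [hε.1, hε.2, Real.sqrt_nonneg (M / (1 + S ^ 2))]
    have hαsq : α ^ 2 ≤ M / (1 + S ^ 2) := by
      rw [← hε₀sq]; nlinarith [hα.1, hα.2, Real.sqrt_nonneg (M / (1 + S ^ 2))]
    have hMS : M / (1 + S ^ 2) * (1 + S ^ 2) = M :=
      div_mul_cancel₀ _ (by positivity)
    have hbds : ε ^ 2 / 4 + S ^ 2 * α ^ 2 / 4 ≤ M / 4 := by nlinarith [sq_nonneg S]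
    have hMmax : M ≤ psi u u' η β ε α xb tb yb sb := by
      rw [hMA]
      apply csSup_le hA_ne
      rintro m ⟨x, t, ht, rfl⟩
      rw [← psi_diag u u' η β ε α x t]
      exact hmax x x t t ht ht
    have hβnn : 0 ≤ β * (enorm2 xb ^ 2 + enorm2 yb ^ 2) := by positivity
    constructor
    · -- 0 < tb
      rcases lt_or_eq_of_le htb.1 with h | h
      · exact h
      exfalso
      have htb0 : tb = 0 := h.symm
      subst htb0
      have h1 : psi u u' η β ε α xb 0 yb sb ≤ ε ^ 2 / 4 + S ^ 2 * α ^ 2 / 4 := by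
        unfold psi
        rw [hu0]
        have h2 := hf_lip xb yb
        have h3 := (hu'grow yb sb hsb).2
        have hq1 := hquad 1 (enorm2 (xb - yb)) ε hε.1
        have hq2 := hquad S sb α hα.1
        have hts : ((0:ℝ) - sb) ^ 2 = sb ^ 2 := by ring
        rw [hts]
        simp only [one_mul, one_pow] at hq1
        linarith [hq1, hq2, h2, h3, hβnn]
      linarith [hMmax, h1, hMpos, hbds]
    · -- 0 < sb
      rcases lt_or_eq_of_le hsb.1 with h | h
      · exact h
      exfalso
      have hsb0 : sb = 0 := h.symm
      subst hsb0
      have h1 : psi u u' η β ε α xb tb yb 0 ≤ ε ^ 2 / 4 := by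
        unfold psi
        rw [hu'0]
        have h2 := hf_lip xb yb
        have h3 := hule xb tb htb
        have hq1 := hquad 1 (enorm2 (xb - yb)) ε hε.1
        have hηt : 0 ≤ η * tb := mul_nonneg hη.le htb.1
        have htbnn : 0 ≤ (tb - 0) ^ 2 / α ^ 2 := by positivity
        simp only [one_mul, one_pow] at hq1
        linarith [hq1, h2, h3, hηt, htbnn, hβnn]
      have hM4 : M / (1 + S ^ 2) ≤ M := by
        apply div_le_self hMpos.le
        nlinarith [sq_nonneg S]
      linarith [hMmax, h1, hMpos, hεsq, hM4]
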